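/- For a tree ordinal t and x ≥ 2: N(o(t[x])) ≤ N(o(t)[x + Cr(t)]) + x + Cr(t) − 2 and o(t[x]) ≤ o(t)[x + Cr(t)], where o is the induced ordinal, [·] the respective fundamental sequences, N the norm, and Cr the ordinal correction function. -/

import Mathlib

/-- Tree ordinals as formal terms: `0`, and `ω^{t₁} + ⋯ + ω^{tₙ}` for tree
ordinals `t₁, …, tₙ` (no ordering condition on the exponents).
`oadd e r` denotes `r + ω^e`, i.e. `e` is the exponent of the **rightmost**
summand and `r` collects the summands to its left. -/
inductive T : Type where
  | zero : T
  | oadd : T → T → T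
deriving DecidableEq

namespace T

/-- The induced ordinal `o(t)` of a tree term (ordinal arithmetic, so smaller
summands may be absorbed). -/
noncomputable def o : T → Ordinal.{0}
  | zero => 0
  | oadd e r => o r + Ordinal.omega0 ^ o e

/-- The norm: `N0 = 0`, `N(ω^α + β) = 1 + Nα + Nβ`. -/
def norm : T → ℕ
  | zero => 0
  | oadd e r => 1 + norm e + norm r

/-- `rep e r x = r + ω^e · x`. -/
def rep (e r : T) : ℕ → T
  | 0 => r
  | x + 1 => oadd e (rep e r x)

/-- The standard fundamental sequences on tree terms:
`0[x] = 0`, `1[x] = 0`, `(t+1)[x] = t`, `(t + ω^{s+1})[x] = t + ω^s · x`,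
`(t + ω^λ)[x] = t + ω^{λ[x]}` for a limit term `λ`. -/
def fund : T → ℕ → T
  | zero, _ => zero
  | oadd zero r, _ => r
  | oadd (oadd zero e') r, x => rep e' r x
  | oadd (oadd (oadd a b) e') r, x => oadd (fund (oadd (oadd a b) e') x) r

/-- Auxiliary sum for the ordinal correction function: `crSum t m` adds
`N(ω^{tᵢ})` for each summand `ω^{tᵢ}` of `t` whose exponent is smaller (as an
ordinal) than some exponent strictly to its right (where `m` is the maximum of
the exponents lying to the right of all of `t`). -/
noncomputable def crSum : T → Ordinal.{0} → ℕ
  | zero, _ => 0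
  | oadd e r, m => (if o e < m then 1 + norm e else 0) + crSum r (max m (o e))

mutual
/-- The ordinal correction function `Cr`:
`Cr(0) = 0` and `Cr(t) = Σ {N(ω^{tᵢ}) : tᵢ < tⱼ for some j > i} + max Cr(tᵢ)`. -/
noncomputable def cr : T → ℕ
  | zero => 0
  | oadd e r => crSum (oadd e r) 0 + max (cr e) (crMax r)

/-- Maximum of `Cr` over the exponents of a term. -/
noncomputable def crMax : T → ℕ
  | zero => 0
  | oadd e r => max (cr e) (crMax r)
end

/-- Cantor normal form predicate: exponents are (weakly) increasing from the
rightmost summand leftwards, and all exponents are themselves in CNF.  Terms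
satisfying `NF` faithfully represent the ordinals below `ε₀`. -/
def NF : T → Prop
  | zero => True
  | oadd e r => NF e ∧ NF r ∧ (match r with | zero => True | oadd f _ => o e ≤ o f)

/-- A term is a limit iff its rightmost summand has nonzero exponent. -/
def IsLim : T → Prop
  | oadd (oadd _ _) _ => True
  | _ => False

/-- Drop rightmost summands with exponent of ordinal value `< b`
(the absorption performed by ordinal addition). -/
noncomputable def cleanup (b : Ordinal.{0}) : T → T
  | zero => zero
  | oadd f s => if o f < b then cleanup b s else oadd f s

/-- Normalization of a tree term to the Cantor normal form of its induced
ordinal: `toNF t` is `NF`, and `o (toNF t) = o t`. -/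
noncomputable def toNF : T → T
  | zero => zero
  | oadd e r => oadd (toNF e) (cleanup (o e) (toNF r))

/-- `repOne r x = r + x`. -/
def repOne (r : T) : ℕ → T
  | 0 => r
  | x + 1 => oadd zero (repOne r x)

/-- `repPair s r x = r + (ω^s + 1) · x`. -/
def repPair (s r : T) : ℕ → T
  | 0 => r
  | x + 1 => oadd zero (oadd s (repPair s r x))

/-- The worm-induced fundamental sequences `⟦·⟧` on tree terms:
`0⟦x⟧ = 0`, `(t+1)⟦x⟧ = t`, `(t+ω)⟦x⟧ = t + x`,
`(t + ω^{s+1})⟦x⟧ = t + (ω^s + 1) · x` for `s ≠ 0`, and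
`(t + ω^λ)⟦x⟧ = t + ω^{λ⟦x⟧}` for a limit term `λ`. -/
def fundW : T → ℕ → T
  | zero, _ => zero
  | oadd zero r, _ => r
  | oadd (oadd zero zero) r, x => repOne r x
  | oadd (oadd zero (oadd a b)) r, x => repPair (oadd a b) r x
  | oadd (oadd (oadd a b) e') r, x => oadd (fundW (oadd (oadd a b) e') x) r

end T

/-- Graph of the Hardy functions (with the standard fundamental sequences):
`H_0(x) = x`, `H_{t+1}(x) = H_t(x+1)`, `H_t(x) = H_{t[x]}(x)` for limit `t`.
`HG t x y` means `H_t(x)` is defined with value `y`. -/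
inductive HG : T → ℕ → ℕ → Prop where
  | zero (x) : HG T.zero x x
  | succ {r x y} : HG r (x + 1) y → HG (T.oadd T.zero r) x y
  | lim {e r x y} (he : e ≠ T.zero) :
      HG (T.fund (T.oadd e r) x) x y → HG (T.oadd e r) x y

/-!
Induction along the definition of `t[x]`. Normalising a term only deletes summands `ω^f` absorbed
by a larger exponent to their right, and these are among the summands counted by `Cr`. So their
total norm is at most `Cr(t)`, which pays for the norm. In the successor case `t = r + ω^(e+1)`
each deleted summand is at most `ω^e`, so the extra `Cr(t)` copies of `ω^e` in `o(t)[x + Cr(t)]`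
pay for them. In the limit case `t = r + ω^λ` they are absorbed by `ω^(λ[x + Cr(t)])`: for `λ` in
normal form, `λ[y]` dominates every normal form below `λ` of norm at most `y` (`FundDominates`),
by the usual comparison of Cantor normal forms.
-/

theorem Ordinal.le_of_dvd_of_lt_add {a b c : Ordinal} (ha : c ∣ a) (hb : c ∣ b)
    (h : a < b + c) : a ≤ b := by
  obtain ⟨q, rfl⟩ := ha
  obtain ⟨p, rfl⟩ := hb
  rcases (zero_le : 0 ≤ c).eq_or_lt with rfl | hc
  · simp
  rw [← mul_add_one, mul_lt_mul_iff_right₀ hc, Order.lt_add_one_iff] at h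
  exact mul_le_mul_right h c

namespace T
open Ordinal

theorem o_oadd (e r : T) : o (oadd e r) = o r + ω ^ o e := rfl

theorem o_oadd_zero (e : T) : o (oadd zero e) = o e + 1 := by
  rw [o, o, opow_zero]

theorem norm_oadd_zero (e : T) : norm (oadd zero e) = 1 + norm e := by
  simp only [norm]

theorem NF.oadd_zero {e : T} (h : NF e) : NF (oadd zero e) := by
  refine ⟨trivial, h, ?_⟩
  cases e
  · trivial
  · exact zero_le

theorem o_cleanup_add_opow (b : Ordinal) (s : T) :
    o (cleanup b s) + ω ^ b = o s + ω ^ b := by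
  induction s with
  | zero => rfl
  | oadd f s _ ih =>
    rw [cleanup]
    split_ifs with h
    · rw [ih, o, add_assoc, add_omega0_opow ((opow_lt_opow_iff_right one_lt_omega0).2 h)]
    · rfl

@[simp]
theorem o_toNF (t : T) : o (toNF t) = o t := by
  induction t with
  | zero => rfl
  | oadd e r ihe ihr => rw [toNF, o, o, ihe, o_cleanup_add_opow, ihr]

theorem cleanup_zero (s : T) : cleanup 0 s = s := by
  cases s <;> simp [cleanup]

theorem cleanup_cleanup {b' b : Ordinal} (h : b' ≤ b) (s : T) :
    cleanup b (cleanup b' s) = cleanup b s := by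
  induction s with
  | zero => rfl
  | oadd f s _ ih =>
    by_cases hf : o f < b'
    · rw [cleanup, if_pos hf, ih, cleanup, if_pos (hf.trans_le h)]
    · rw [cleanup, if_neg hf]

theorem le_of_cleanup_eq_oadd {b : Ordinal} {f s' s : T} (h : cleanup b s = oadd f s') :
    b ≤ o f := by
  induction s with
  | zero => cases h
  | oadd g s _ ih =>
    rw [cleanup] at h
    split_ifs at h with hg
    · exact ih h
    · cases h; exact not_lt.1 hg

theorem NF.cleanup {s : T} (b : Ordinal) (h : NF s) : NF (cleanup b s) := by
  induction s with
  | zero => exact h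
  | oadd f s _ ih =>
    rw [T.cleanup]
    split_ifs
    · exact ih h.2.1
    · exact h

theorem nf_toNF (t : T) : NF (toNF t) := by
  induction t with
  | zero => trivial
  | oadd e r ihe ihr =>
    refine ⟨ihe, ihr.cleanup _, ?_⟩
    rcases hc : cleanup (o e) (toNF r) with _ | ⟨f, s'⟩
    · trivial
    · simpa using le_of_cleanup_eq_oadd hc

theorem norm_cleanup_le (b : Ordinal) (s : T) : norm (cleanup b s) ≤ norm s := by
  induction s with
  | zero => exact le_rfl
  | oadd f s _ ih =>
    rw [cleanup]
    split_ifs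
    · exact ih.trans (by simp only [norm]; omega)
    · exact le_rfl

theorem norm_toNF_le (t : T) : norm (toNF t) ≤ norm t := by
  induction t with
  | zero => exact le_rfl
  | oadd e r ihe ihr =>
    have := (norm_cleanup_le (o e) (toNF r)).trans ihr
    simp only [toNF, norm]
    omega

theorem cleanup_toNF_oadd_of_lt {b : Ordinal} {f : T} (r : T) (h : o f < b) :
    cleanup b (toNF (oadd f r)) = cleanup b (toNF r) := by
  rw [toNF, cleanup, if_pos (by simpa using h), cleanup_cleanup h.le]

theorem cleanup_toNF_oadd_of_le {b : Ordinal} {f : T} (r : T) (h : b ≤ o f) :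
    cleanup b (toNF (oadd f r)) = toNF (oadd f r) := by
  rw [toNF, cleanup, if_neg (by simpa using h)]

theorem crSum_oadd_of_lt {b : Ordinal} {f : T} (r : T) (h : o f < b) :
    crSum (oadd f r) b = 1 + norm f + crSum r b := by
  rw [crSum, if_pos h, max_eq_left h.le]

theorem cr_oadd (e r : T) : cr (oadd e r) = crSum r (o e) + max (cr e) (crMax r) := by
  rw [cr, crSum, if_neg (not_lt_of_ge zero_le), max_eq_right zero_le, zero_add]

theorem norm_cleanup_toNF_le {b' b : Ordinal} (h : b' ≤ b) (r : T) :
    norm (cleanup b' (toNF r)) ≤ norm (cleanup b (toNF r)) + crSum r b := by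
  induction r generalizing b' with
  | zero => exact Nat.le_add_right _ _
  | oadd f r _ ih =>
    rcases lt_or_ge (o f) b with hb | hb
    · rw [crSum_oadd_of_lt r hb, cleanup_toNF_oadd_of_lt r hb]
      rcases lt_or_ge (o f) b' with hb' | hb'
      · rw [cleanup_toNF_oadd_of_lt r hb']
        have := ih h
        omega
      · have := ih hb.le
        have := norm_toNF_le f
        rw [cleanup_toNF_oadd_of_le r hb', toNF, norm]
        omega
    · rw [cleanup_toNF_oadd_of_le r hb, cleanup_toNF_oadd_of_le r (h.trans hb)]
      omega

theorem o_le_cleanup_toNF_add_crSum (a : Ordinal) (r : T) :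
    o r ≤ o (cleanup (a + 1) (toNF r)) + ω ^ a * (crSum r (a + 1) : ℕ) := by
  induction r with
  | zero => exact zero_le
  | oadd f r _ ih =>
    rcases lt_or_ge (o f) (a + 1) with hf | hf
    · rw [crSum_oadd_of_lt r hf, cleanup_toNF_oadd_of_lt r hf, o]
      have hfa : ω ^ o f ≤ ω ^ a :=
        opow_le_opow_right omega0_pos (Order.lt_add_one_iff.1 hf)
      calc o r + ω ^ o f
          ≤ o (cleanup (a + 1) (toNF r)) + ω ^ a * (crSum r (a + 1) : ℕ) + ω ^ a :=
            add_le_add ih hfa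
        _ = o (cleanup (a + 1) (toNF r)) + ω ^ a * ((crSum r (a + 1) + 1 : ℕ) : Ordinal) := by
            rw [Nat.cast_add_one, mul_add_one, add_assoc]
        _ ≤ _ := by gcongr _ + _ * ?_; exact Nat.cast_le.2 (by omega)
    · rw [cleanup_toNF_oadd_of_le r hf, o_toNF]
      exact le_self_add

theorem o_add_opow_eq_cleanup {b β : Ordinal} (r : T)
    (h : ∀ f : T, o f < b → 1 + norm f ≤ crSum r b → o f < β) :
    o r + ω ^ β = o (cleanup b (toNF r)) + ω ^ β := by
  induction r with
  | zero => rfl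
  | oadd f r _ ih =>
    rcases lt_or_ge (o f) b with hf | hf
    · simp only [crSum_oadd_of_lt r hf] at h
      have hβ : ω ^ o f + ω ^ β = ω ^ β :=
        add_omega0_opow ((opow_lt_opow_iff_right one_lt_omega0).2 (h f hf (by omega)))
      rw [cleanup_toNF_oadd_of_lt r hf, o, add_assoc, hβ]
      exact ih fun f' hf' hn => h f' hf' (by omega)
    · rw [cleanup_toNF_oadd_of_le r hf, o_toNF]

theorem toNF_oadd_zero (e : T) : toNF (oadd zero e) = oadd zero (toNF e) := by
  rw [toNF, toNF, o, cleanup_zero]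

theorem toNF_oadd_oadd_zero (e r : T) :
    toNF (oadd (oadd zero e) r) = oadd (oadd zero (toNF e)) (cleanup (o e + 1) (toNF r)) := by
  rw [toNF, toNF_oadd_zero, o_oadd_zero]

theorem o_rep (e r : T) (z : ℕ) : o (rep e r z) = o r + ω ^ o e * z := by
  induction z with
  | zero => simp [rep]
  | succ z ih => rw [rep, o, ih, Nat.cast_add_one, mul_add_one, add_assoc]

theorem norm_rep (e r : T) (z : ℕ) : norm (rep e r z) = z * (1 + norm e) + norm r := by
  induction z with
  | zero => simp [rep]
  | succ z ih => rw [rep, norm, ih]; ring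

theorem toNF_rep_succ (e r : T) (z : ℕ) :
    toNF (rep e r (z + 1)) = rep (toNF e) (cleanup (o e) (toNF r)) (z + 1) := by
  induction z with
  | zero => rfl
  | succ z ih =>
    rw [rep, toNF, ih, rep, cleanup, if_neg (by simp)]
    rfl

theorem isLim_toNF {t : T} (h : IsLim t) : IsLim (toNF t) := by
  rcases t with _ | ⟨_ | _, _⟩ <;> first | exact h.elim | trivial

theorem fund_oadd_of_isLim {e : T} (h : IsLim e) (r : T) (x : ℕ) :
    fund (oadd e r) x = oadd (fund e x) r := by
  rcases e with _ | ⟨_ | _, _⟩ <;> first | exact h.elim | rfl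

theorem isSuccLimit_o {t : T} (h : IsLim t) : Order.IsSuccLimit (o t) := by
  rcases t with _ | ⟨_ | ⟨a, b⟩, r⟩
  · exact h.elim
  · exact h.elim
  · refine isSuccLimit_add _ (isSuccLimit_opow_left isSuccLimit_omega0 ?_)
    rw [o]
    exact ((opow_pos _ omega0_pos).trans_le le_add_self).ne'

theorem o_fund_le (t : T) (x : ℕ) : o (fund t x) ≤ o t := by
  induction t, x using fund.induct with
  | case1 x => exact le_rfl
  | case2 r x => exact le_self_add
  | case3 e r x =>
    rw [fund, o_rep, o, o_oadd_zero, ← Order.succ_eq_add_one, opow_succ]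
    gcongr
    exact (natCast_lt_omega0 x).le
  | case4 a b e r x ih =>
    rw [fund, o, o]
    gcongr
    exact omega0_pos

theorem norm_fund_mono (t : T) {x z : ℕ} (hxz : x ≤ z) : norm (fund t x) ≤ norm (fund t z) := by
  induction t, x using fund.induct with
  | case1 x => exact le_rfl
  | case2 r x => exact le_rfl
  | case3 e r x =>
    rw [fund, fund, norm_rep, norm_rep]
    gcongr
  | case4 a b e r x ih =>
    simp only [fund, norm]
    have := ih hxz
    omega

theorem strictMono_o_fund {t : T} (h : IsLim t) : StrictMono fun x => o (fund t x) := by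
  intro x z hxz
  induction t, x using fund.induct with
  | case1 x => exact h.elim
  | case2 r x => exact h.elim
  | case3 e r x =>
    simp only [fund, o_rep]
    gcongr
    exact opow_pos _ omega0_pos
  | case4 a b e r x ih =>
    simp only [fund, o]
    exact add_lt_add_right ((opow_lt_opow_iff_right one_lt_omega0).2 (ih trivial hxz)) _


theorem opow_dvd_o_of_nf {e r : T} (h : NF (oadd e r)) : ω ^ o e ∣ o r := by
  induction r generalizing e with
  | zero => exact dvd_zero _
  | oadd f s _ ih =>
    obtain ⟨-, hfs, hef⟩ := h
    exact (opow_dvd_opow _ hef).trans (dvd_add (ih hfs) dvd_rfl)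

theorem o_le_of_nf_of_lt_add {α : Ordinal} {f g r : T} (hg : NF (oadd f g)) (hf : α ≤ o f)
    (hr : ω ^ α ∣ o r) (hlt : o (oadd f g) < o r + ω ^ α) : o (oadd f g) ≤ o r :=
  le_of_dvd_of_lt_add
    ((opow_dvd_opow _ hf).trans (dvd_add (opow_dvd_o_of_nf hg) dvd_rfl)) hr hlt

def FundDominates (t : T) : Prop :=
  ∀ ⦃g : T⦄ (x : ℕ), NF g → o g < o t → norm g ≤ x → o g ≤ o (fund t x)

theorem FundDominates.lt_fund {e : T} (h : FundDominates e) (he : IsLim e) {f : T} (hf : NF f)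
    (hlt : o f < o e) {x : ℕ} (hx : 1 + norm f ≤ x) : o f < o (fund e x) := by
  have := h x hf.oadd_zero (by rw [o_oadd_zero]; exact (isSuccLimit_o he).add_one_lt hlt)
    (by rwa [norm_oadd_zero])
  rwa [o_oadd_zero, Order.add_one_le_iff] at this

theorem fundDominates_oadd_oadd_zero {e r : T} (hnf : NF (oadd (oadd zero e) r)) :
    FundDominates (oadd (oadd zero e) r) := by
  have hr : ω ^ (o e + 1) ∣ o r := by simpa [o_oadd_zero] using opow_dvd_o_of_nf hnf
  intro g
  induction g with
  | zero => exact fun _ _ _ _ => zero_le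
  | oadd f g _ ih =>
    intro x hg hlt hx
    rw [fund, o_rep]
    rcases lt_or_ge (o e) (o f) with hef | hfe
    · rw [o_oadd (oadd zero e), o_oadd_zero] at hlt
      exact (o_le_of_nf_of_lt_add hg (Order.add_one_le_of_lt hef) hr hlt).trans le_self_add
    · simp only [norm] at hx
      obtain ⟨x, rfl⟩ : ∃ y, x = y + 1 := ⟨x - 1, by omega⟩
      have hg' := ih x hg.2.1 (le_self_add.trans_lt hlt) (by omega)
      rw [fund, o_rep] at hg'
      calc o (oadd f g) = o g + ω ^ o f := rfl
        _ ≤ o r + ω ^ o e * x + ω ^ o e := add_le_add hg' (opow_le_opow_right omega0_pos hfe)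
        _ = o r + ω ^ o e * (x + 1 : ℕ) := by rw [Nat.cast_add_one, mul_add_one, add_assoc]

theorem FundDominates.oadd_of_isLim {e r : T} (he : IsLim e) (hnf : NF (oadd e r))
    (ih : FundDominates e) : FundDominates (oadd e r) := by
  intro g
  induction g with
  | zero => exact fun _ _ _ _ => zero_le
  | oadd f g _ ihg =>
    intro x hg hlt hx
    rw [fund_oadd_of_isLim he, o_oadd (fund e x)]
    rcases lt_or_ge (o f) (o e) with hfe | hef
    · simp only [norm] at hx
      obtain ⟨x, rfl⟩ : ∃ y, x = y + 1 := ⟨x - 1, by omega⟩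
      have hg' := ihg x hg.2.1 (le_self_add.trans_lt hlt) (by omega)
      rw [fund_oadd_of_isLim he, o_oadd] at hg'
      have hf : o f < o (fund e (x + 1)) := ih.lt_fund he hg.1 hfe (by omega)
      have hx : o (fund e x) < o (fund e (x + 1)) := strictMono_o_fund he (Nat.lt_succ_self x)
      calc o (oadd f g) = o g + ω ^ o f := rfl
        _ ≤ o r + (ω ^ o (fund e x) + ω ^ o f) := by rw [← add_assoc]; gcongr
        _ ≤ o r + ω ^ o (fund e (x + 1)) := by
          gcongr
          refine (isPrincipal_add_omega0_opow _ ?_ ?_).le <;>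
            exact (opow_lt_opow_iff_right one_lt_omega0).2 ‹_›
    · rw [o_oadd e] at hlt
      exact (o_le_of_nf_of_lt_add hg hef (opow_dvd_o_of_nf hnf) hlt).trans le_self_add

theorem fundDominates_of_nf {t : T} (hl : IsLim t) (hnf : NF t) : FundDominates t := by
  induction t with
  | zero => exact hl.elim
  | oadd e r ihe _ =>
    rcases e with _ | ⟨_ | _, _⟩
    · exact hl.elim
    · exact fundDominates_oadd_oadd_zero hnf
    · exact (ihe trivial hnf.1).oadd_of_isLim trivial hnf

def FundStepBound (t : T) (x : ℕ) : Prop :=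
  norm (toNF (fund t x)) + 2 ≤ norm (fund (toNF t) (x + cr t)) + x + cr t ∧
    o (fund t x) ≤ o (fund (toNF t) (x + cr t))

theorem fundStepBound_oadd_oadd_zero (e r : T) {x : ℕ} (hx : 2 ≤ x) :
    FundStepBound (oadd (oadd zero e) r) x := by
  set c := cr (oadd (oadd zero e) r)
  have hc : crSum r (o e + 1) ≤ c := by
    simp only [c, cr_oadd, o_oadd_zero]
    omega
  have hfund : fund (toNF (oadd (oadd zero e) r)) (x + c) =
      rep (toNF e) (cleanup (o e + 1) (toNF r)) (x + c) := by
    rw [toNF_oadd_oadd_zero, fund]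
  refine ⟨?_, ?_⟩
  · obtain ⟨y, rfl⟩ : ∃ y, x = y + 1 := ⟨x - 1, by omega⟩
    have := norm_cleanup_toNF_le (le_self_add : o e ≤ o e + 1) r
    rw [hfund, fund, toNF_rep_succ, norm_rep, norm_rep]
    nlinarith
  · rw [hfund, fund, o_rep, o_rep, o_toNF]
    calc o r + ω ^ o e * x
        ≤ o (cleanup (o e + 1) (toNF r)) + ω ^ o e * (crSum r (o e + 1) : ℕ) + ω ^ o e * x := by
          gcongr
          exact o_le_cleanup_toNF_add_crSum (o e) r
      _ = o (cleanup (o e + 1) (toNF r)) + ω ^ o e * (crSum r (o e + 1) + x : ℕ) := by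
          rw [add_assoc, ← mul_add, Nat.cast_add]
      _ ≤ o (cleanup (o e + 1) (toNF r)) + ω ^ o e * (x + c : ℕ) := by
          gcongr _ + _ * ?_
          exact Nat.cast_le.2 (by omega)

theorem FundStepBound.oadd_of_isLim {e : T} {x : ℕ} (ih : FundStepBound e x) (he : IsLim e)
    (r : T) : FundStepBound (oadd e r) x := by
  set c := cr (oadd e r)
  have hc : crSum r (o e) + cr e ≤ c := by
    simp only [c, cr_oadd]
    omega
  have hfund : fund (toNF (oadd e r)) (x + c) =
      oadd (fund (toNF e) (x + c)) (cleanup (o e) (toNF r)) := by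
    rw [toNF, fund_oadd_of_isLim (isLim_toNF he)]
  rw [FundStepBound, hfund, fund_oadd_of_isLim he]
  refine ⟨?_, ?_⟩
  · have := ih.1
    have := norm_cleanup_toNF_le (o_fund_le e x) r
    have := norm_fund_mono (toNF e) (show x + cr e ≤ x + c by omega)
    simp only [toNF, norm]
    omega
  · set β := o (fund (toNF e) (x + c))
    have hβ : o (fund e x) ≤ β :=
      ih.2.trans ((strictMono_o_fund (isLim_toNF he)).monotone (by omega))
    have habsorb : ∀ f : T, o f < o e → 1 + norm f ≤ crSum r (o e) → o f < β := by
      intro f hfe hf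
      have hdom := fundDominates_of_nf (isLim_toNF he) (nf_toNF e)
      simpa using hdom.lt_fund (isLim_toNF he) (nf_toNF f) (by simpa using hfe)
        (by have := norm_toNF_le f; omega)
    calc o (oadd (fund e x) r) ≤ o r + ω ^ β := by
          rw [o_oadd]
          gcongr
          exact omega0_pos
      _ = o (cleanup (o e) (toNF r)) + ω ^ β := o_add_opow_eq_cleanup r habsorb

end T

open T

/-- `o(t)[y]` is computed as `(toNF t)[y]`, on the Cantor normal form of `o(t)`. -/
theorem norm_o_fund_step (t : T) (x : ℕ) (hx : 2 ≤ x) :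
    T.norm (T.toNF (T.fund t x)) + 2 ≤
      T.norm (T.fund (T.toNF t) (x + T.cr t)) + x + T.cr t ∧
    T.o (T.fund t x) ≤ T.o (T.fund (T.toNF t) (x + T.cr t)) := by
  show FundStepBound t x
  induction t, x using T.fund.induct with
  | case1 x => exact ⟨by simp only [fund, toNF, T.norm, cr]; omega, le_rfl⟩
  | case2 r x =>
    simp only [FundStepBound, fund, toNF_oadd_zero, o_toNF]
    exact ⟨by have := norm_toNF_le (toNF r); omega, le_rfl⟩
  | case3 e r x => exact fundStepBound_oadd_oadd_zero e r hx
  | case4 a b e r x ih => exact (ih hx).oadd_of_isLim trivial r
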